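/- The exponential correlation matrix H(φ) with entries H_{ij} = exp(-φ·|s_i - s_j|) for φ > 0 and distinct points s_1, ..., s_n on the real line is positive definite. -/

import Mathlib

/-!
Writing `g i = exp (2 φ s i)`, one has
`exp (-φ |s i - s j|) = exp (-φ s i) * min (g i) (g j) * exp (-φ s j)`, so `H(φ)` is congruent, via a
positive diagonal matrix, to the min kernel `min (g i) (g j)` at distinct positive points. The min
kernel is the covariance of Brownian motion: `min a b = ∫ 𝟙(0, a] 𝟙(0, b]`, so its quadratic form is
`∫ F ^ 2` for the step function `F = ∑ i, x i 𝟙(0, g i]`. If `g i` is the largest point carrying a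
nonzero weight `x i`, then `F = x i` just to the left of `g i`, so `∫ F ^ 2 > 0`.
-/

open MeasureTheory Set Filter Topology Matrix

lemma integral_sq_sum_eq_sum_sum {α ι : Type*} [MeasurableSpace α] {μ : Measure α} [Fintype ι]
    {f : ι → α → ℝ} (hf : ∀ i j, Integrable (fun t => f i t * f j t) μ) (x : ι → ℝ) :
    ∫ t, (∑ i, x i * f i t) ^ 2 ∂μ = ∑ i, ∑ j, x i * x j * ∫ t, f i t * f j t ∂μ := by
  have hsq : ∀ t, (∑ i, x i * f i t) ^ 2 = ∑ i, ∑ j, x i * x j * (f i t * f j t) := fun t => by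
    simp only [sq, Finset.sum_mul_sum, mul_mul_mul_comm]
  have hf' : ∀ i j, Integrable (fun t => x i * x j * (f i t * f j t)) μ :=
    fun i j => (hf i j).const_mul _
  simp_rw [hsq]
  rw [integral_finsetSum _ fun i _ => integrable_finsetSum _ fun j _ => hf' i j]
  refine Finset.sum_congr rfl fun i _ => ?_
  rw [integral_finsetSum _ fun j _ => hf' i j]
  simp only [integral_const_mul]

lemma indicator_Ioc_mul_indicator_Ioc (a b t : ℝ) :
    (Ioc 0 a).indicator (1 : ℝ → ℝ) t * (Ioc 0 b).indicator 1 t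
      = (Ioc 0 (min a b)).indicator 1 t := by
  rw [← Pi.mul_apply, ← inter_indicator_one, Ioc_inter_Ioc, max_self]

lemma dotProduct_mulVec_min_eq_integral {ι : Type*} [Fintype ι] {g : ι → ℝ}
    (hg : ∀ i, 0 ≤ g i) (x : ι → ℝ) :
    x ⬝ᵥ (of (fun i j => min (g i) (g j)) *ᵥ x)
      = ∫ t, (∑ i, x i * (Ioc 0 (g i)).indicator (1 : ℝ → ℝ) t) ^ 2 := by
  have hint : ∀ i j, Integrable fun t =>
      (Ioc 0 (g i)).indicator (1 : ℝ → ℝ) t * (Ioc 0 (g j)).indicator 1 t := fun i j => by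
    simp only [indicator_Ioc_mul_indicator_Ioc]
    exact (integrable_indicator_iff measurableSet_Ioc).2 (integrableOn_const measure_Ioc_lt_top.ne)
  simp only [integral_sq_sum_eq_sum_sum hint, indicator_Ioc_mul_indicator_Ioc,
    integral_indicator_one measurableSet_Ioc, Real.volume_real_Ioc_of_le (le_min (hg _) (hg _)),
    sub_zero, dotProduct, mulVec, of_apply, Finset.mul_sum]
  exact Finset.sum_congr rfl fun i _ => Finset.sum_congr rfl fun j _ => by ring

lemma memLp_sum_mul_indicator_Ioc {ι : Type*} [Fintype ι] (g x : ι → ℝ) :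
    MemLp (fun t => ∑ i, x i * (Ioc 0 (g i)).indicator (1 : ℝ → ℝ) t) 2 :=
  memLp_finsetSum _ fun i _ =>
    (memLp_indicator_const 2 measurableSet_Ioc 1 (.inr measure_Ioc_lt_top.ne)).const_mul (x i)

lemma eventually_indicator_Ioc_eq {a c : ℝ} (hc : 0 < c) :
    ∀ᶠ t in 𝓝[<] c, (Ioc 0 a).indicator (1 : ℝ → ℝ) t = if c ≤ a then 1 else 0 := by
  split_ifs with hca
  · filter_upwards [Ioo_mem_nhdsLT hc] with t ht
    exact indicator_of_mem (show t ∈ Ioc 0 a from ⟨ht.1, ht.2.le.trans hca⟩) _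
  · filter_upwards [Ioo_mem_nhdsLT (not_le.1 hca)] with t ht
    exact indicator_of_notMem (fun h => ht.1.not_ge h.2) _

theorem posDef_min_of_injective {ι : Type*} [Fintype ι] {g : ι → ℝ} (hg_pos : ∀ i, 0 < g i)
    (hg : Function.Injective g) : (of fun i j => min (g i) (g j)).PosDef := by
  classical
  refine .of_dotProduct_mulVec_pos (IsHermitian.ext fun i j => by simp [min_comm]) fun x hx => ?_
  rw [star_trivial, dotProduct_mulVec_min_eq_integral fun i => (hg_pos i).le]
  set F := fun t => ∑ i, x i * (Ioc 0 (g i)).indicator (1 : ℝ → ℝ) t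
  obtain ⟨i, hxi, hmax⟩ : ∃ i, x i ≠ 0 ∧ ∀ j, x j ≠ 0 → g j ≤ g i := by
    obtain ⟨j, hj⟩ := Function.ne_iff.1 hx
    obtain ⟨i, hi, hmax⟩ := Finset.exists_max_image {j | x j ≠ 0} g ⟨j, by simpa using hj⟩
    exact ⟨i, by simpa using hi, fun j hj => hmax j (by simpa using hj)⟩
  -- Just left of `g i` only the points `g j ≥ g i` contribute to `F`, and only `i` among them
  -- carries weight.
  have hF : ∀ᶠ t in 𝓝[<] g i, F t = x i := by
    filter_upwards [eventually_all.2 fun j => eventually_indicator_Ioc_eq (a := g j) (hg_pos i)]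
      with t ht
    simp only [F, ht, mul_ite, mul_one, mul_zero]
    rw [Finset.sum_eq_single i (fun j _ hji => ?_) (by simp), if_pos le_rfl]
    split_ifs with hij
    · by_contra hxj
      exact hji (hg ((hmax j hxj).antisymm hij))
    · rfl
  obtain ⟨b, hb, hsub⟩ := mem_nhdsLT_iff_exists_Ioo_subset.1 hF
  rw [integral_pos_iff_support_of_nonneg (fun t => sq_nonneg (F t))
    (memLp_sum_mul_indicator_Ioc g x).integrable_sq]
  calc (0 : ENNReal) < volume (Ioo b (g i)) := by simpa using hb
    _ ≤ volume (Function.support fun t => F t ^ 2) :=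
      measure_mono fun t ht => by simp [show F t = x i from hsub ht, hxi]

lemma exp_neg_mul_abs_sub {φ : ℝ} (hφ : 0 ≤ φ) (a b : ℝ) :
    Real.exp (-φ * |a - b|) =
      Real.exp (-φ * a) * min (Real.exp (2 * φ * a)) (Real.exp (2 * φ * b)) * Real.exp (-φ * b) := by
  have hmono : Monotone fun t => Real.exp (2 * φ * t) :=
    Real.exp_monotone.comp fun _ _ h => mul_le_mul_of_nonneg_left h (by positivity)
  rw [← hmono.map_min, ← Real.exp_add, ← Real.exp_add, abs_sub_comm, ← max_sub_min_eq_abs,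
    show max a b = a + b - min a b by linarith [min_add_max a b]]
  ring_nf

/-- The exponential correlation matrix H(φ) with entries
H_{ij} = exp(-φ·|s_i - s_j|), for φ > 0 and distinct points s_1,...,s_n on
the real line, is positive definite. -/
theorem stmt8 (n : ℕ) (s : Fin n → ℝ) (hs : Function.Injective s)
    (φ : ℝ) (hφ : 0 < φ) :
    (Matrix.of fun i j : Fin n => Real.exp (-φ * |s i - s j|)).PosDef := by
  set d : Fin n → ℝ := fun i => Real.exp (-φ * s i)
  set g : Fin n → ℝ := fun i => Real.exp (2 * φ * s i)
  have hg : Function.Injective g := fun i j h =>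
    hs (mul_left_cancel₀ (by positivity) (Real.exp_injective h))
  have hd : Function.Injective (diagonal d).mulVec := mulVec_injective_iff_isUnit.2 <|
    isUnit_diagonal.2 <| Pi.isUnit_iff.2 fun i => (Real.exp_pos _).ne'.isUnit
  have hH : (of fun i j => Real.exp (-φ * |s i - s j|))
      = (diagonal d)ᴴ * of (fun i j => min (g i) (g j)) * diagonal d := by
    ext i j
    rw [of_apply, exp_neg_mul_abs_sub hφ.le]
    simp [d, g]
  rw [hH]
  exact (posDef_min_of_injective (fun i => Real.exp_pos _) hg).conjTranspose_mul_mul_same hd
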